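/- arXiv:math/0501131 — 2 statements merged into one kernel-verified Lean document; each statement's English description precedes it below -/
import Mathlib

section
/- Let ψ ∈ Ω∞ and let κ ∈ 𝒦 have dominated growth with respect to ψ with constant C > 0, i.e. (ψ∘κ)'(t)/(ψ∘κ)(t) < C/t for all t > 0. Then for every x ∈ M₊(ψ) and every t > 0 at which φ_κ(x) is differentiable, t · (φ_κ(x))'(t) ≥ −C‖x‖_{M(ψ)}. -/
open MeasureTheory Filter Set

noncomputable section

/-- `f` is bounded and continuous on `[0,∞)`, i.e. (the restriction of) `f`
belongs to `C_b([0,∞))`. -/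
def IsCb (f : ℝ → ℝ) : Prop :=
  ContinuousOn f (Ici 0) ∧ ∃ M : ℝ, ∀ t ∈ Ici (0:ℝ), |f t| ≤ M

/-- Bounded real sequences, i.e. elements of `ℓ∞(ℕ)`. -/
def IsBddSeq (a : ℕ → ℝ) : Prop := ∃ M : ℝ, ∀ n, |a n| ≤ M

/-- A Banach limit on `C_b([0,∞))`: a positive linear translation-invariant
functional with `L(1) = 1`.  (The underlying map is defined on all of `ℝ → ℝ`;
the axioms only refer to its values on bounded continuous functions on `[0,∞)`.) -/
structure BanachLimitR where
  toFun : (ℝ → ℝ) → ℝ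
  map_add : ∀ f g : ℝ → ℝ, IsCb f → IsCb g →
    toFun (fun t => f t + g t) = toFun f + toFun g
  map_smul : ∀ (c : ℝ) (f : ℝ → ℝ), IsCb f → toFun (fun t => c * f t) = c * toFun f
  pos : ∀ f : ℝ → ℝ, IsCb f → (∀ t ∈ Ici (0:ℝ), 0 ≤ f t) → 0 ≤ toFun f
  map_one : toFun (fun _ => 1) = 1
  shift_inv : ∀ f : ℝ → ℝ, IsCb f → ∀ s : ℝ, 0 ≤ s → toFun (fun t => f (t + s)) = toFun f

/-- A Banach limit on `ℓ∞(ℕ)`: a positive linear shift-invariant functional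
with `L'(1) = 1`. -/
structure BanachLimitN where
  toFun : (ℕ → ℝ) → ℝ
  map_add : ∀ a b : ℕ → ℝ, IsBddSeq a → IsBddSeq b →
    toFun (fun n => a n + b n) = toFun a + toFun b
  map_smul : ∀ (c : ℝ) (a : ℕ → ℝ), IsBddSeq a → toFun (fun n => c * a n) = c * toFun a
  pos : ∀ a : ℕ → ℝ, IsBddSeq a → (∀ n, 0 ≤ a n) → 0 ≤ toFun a
  map_one : toFun (fun _ => 1) = 1
  shift_inv : ∀ a : ℕ → ℝ, IsBddSeq a → toFun (fun n => a (n + 1)) = toFun a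

/-- An element of `SC_b^*([0,∞))`: a positive linear functional on `C_b([0,∞))`
with `γ(1) = 1` vanishing on `C₀([0,∞))`. -/
structure SCbStar where
  toFun : (ℝ → ℝ) → ℝ
  map_add : ∀ f g : ℝ → ℝ, IsCb f → IsCb g →
    toFun (fun t => f t + g t) = toFun f + toFun g
  map_smul : ∀ (c : ℝ) (f : ℝ → ℝ), IsCb f → toFun (fun t => c * f t) = c * toFun f
  pos : ∀ f : ℝ → ℝ, IsCb f → (∀ t ∈ Ici (0:ℝ), 0 ≤ f t) → 0 ≤ toFun f
  map_one : toFun (fun _ => 1) = 1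
  vanish : ∀ f : ℝ → ℝ, IsCb f → Tendsto f atTop (nhds 0) → toFun f = 0

/-- A positive linear functional on `C_b([0,∞))`. -/
structure PosLinFunc where
  toFun : (ℝ → ℝ) → ℝ
  map_add : ∀ f g : ℝ → ℝ, IsCb f → IsCb g →
    toFun (fun t => f t + g t) = toFun f + toFun g
  map_smul : ∀ (c : ℝ) (f : ℝ → ℝ), IsCb f → toFun (fun t => c * f t) = c * toFun f
  pos : ∀ f : ℝ → ℝ, IsCb f → (∀ t ∈ Ici (0:ℝ), 0 ≤ f t) → 0 ≤ toFun f

/-- `ψ ∈ Ω_∞`: concave on `[0,∞)`, nonnegative, `ψ(t) → 0` as `t → 0⁺` and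
`ψ(t) → ∞` as `t → ∞`. -/
def OmegaInf (ψ : ℝ → ℝ) : Prop :=
  ConcaveOn ℝ (Ici 0) ψ ∧ (∀ t ∈ Ici (0:ℝ), 0 ≤ ψ t) ∧
    Tendsto ψ (nhdsWithin 0 (Ioi 0)) (nhds 0) ∧ Tendsto ψ atTop atTop

/-- The decreasing rearrangement `x*` of a measurable function `x` on `[0,∞)`. -/
def decRearr (x : ℝ → ℝ) (t : ℝ) : ℝ :=
  sInf {s : ℝ | 0 ≤ s ∧ volume {u : ℝ | 0 ≤ u ∧ s < |x u|} ≤ ENNReal.ofReal t}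

/-- The weighted mean function `φ(x)(t) = (1/ψ(t)) ∫₀ᵗ x*(s) ds`. -/
def phiW (ψ x : ℝ → ℝ) (t : ℝ) : ℝ := (∫ s in (0:ℝ)..t, decRearr x s) / ψ t

/-- Membership in the Marcinkiewicz space `M(ψ)`. -/
def MemM (ψ x : ℝ → ℝ) : Prop :=
  Measurable x ∧ ∃ M : ℝ, ∀ t > (0:ℝ), phiW ψ x t ≤ M

/-- Membership in the positive cone `M₊(ψ)`. -/
def MemMplus (ψ x : ℝ → ℝ) : Prop := MemM ψ x ∧ ∀ t ∈ Ici (0:ℝ), 0 ≤ x t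

/-- The Marcinkiewicz norm `‖x‖_{M(ψ)} = sup_{t>0} φ(x)(t)`. -/
def MNorm (ψ x : ℝ → ℝ) : ℝ := ⨆ t > (0:ℝ), phiW ψ x t

/-- `κ ∈ 𝒦`: strictly increasing, invertible (as a map of `[0,∞)` onto itself),
differentiable, unbounded, with `κ(0) = 0`. -/
def MemK (κ : ℝ → ℝ) : Prop :=
  StrictMonoOn κ (Ici 0) ∧ κ 0 = 0 ∧ MapsTo κ (Ici 0) (Ici 0) ∧
    SurjOn κ (Ici 0) (Ici 0) ∧ DifferentiableOn ℝ κ (Ici 0) ∧ Tendsto κ atTop atTop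

/-- `f_{L,κ}(x) = L(φ_κ(x))` for a Banach limit `L` on `C_b([0,∞))`; the function
`φ_κ(x)`, bounded and continuous on `(0,∞)`, is fed to `L` as `t ↦ φ_κ(x)(max t 1)`. -/
def fL (L : BanachLimitR) (ψ κ x : ℝ → ℝ) : ℝ :=
  L.toFun fun t => phiW ψ x (κ (max t 1))

/-- `f_{L',κ}(x) = L'({φ(x)(κ(n))}ₙ)` for a Banach limit `L'` on `ℓ∞(ℕ)`. -/
def fLN (L' : BanachLimitN) (ψ κ x : ℝ → ℝ) : ℝ :=
  L'.toFun fun n => phiW ψ x (κ n)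

/-- `κ` has restricted growth with respect to `ψ` (`κ ∈ R(ψ)`): the sequence
`ψ(κ(n))/ψ(κ(n+1))` is almost convergent to `1`. -/
def RestrictedGrowth (ψ κ : ℝ → ℝ) : Prop :=
  ∀ L' : BanachLimitN, L'.toFun (fun n => ψ (κ n) / ψ (κ ((n:ℝ) + 1))) = 1

/-- `κ` has dominated growth with respect to `ψ` (`κ ∈ D(ψ)`):
`(ψ∘κ)'(t)/(ψ∘κ)(t) < C/t` for some `C > 0` and all `t > 0`. -/
def DominatedGrowth (ψ κ : ℝ → ℝ) : Prop :=
  (∀ t > (0:ℝ), DifferentiableAt ℝ (fun u => ψ (κ u)) t) ∧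
    ∃ C > (0:ℝ), ∀ t > (0:ℝ), deriv (fun u => ψ (κ u)) t / ψ (κ t) < C / t

/-- `κ` is of exponential increase: `κ(t + C) > 2κ(t)` for some `C > 0` and all `t > 0`. -/
def ExpIncrease (κ : ℝ → ℝ) : Prop := ∃ C > (0:ℝ), ∀ t > (0:ℝ), 2 * κ t < κ (t + C)

/-- The piecewise linear extension map `p : ℓ∞(ℕ) → C_b([0,∞))`. -/
def plExt (a : ℕ → ℝ) (t : ℝ) : ℝ :=
  a ⌊t⌋₊ + (a (⌊t⌋₊ + 1) - a ⌊t⌋₊) * (t - (⌊t⌋₊ : ℝ))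

/-- The Cesàro mean `C(g)(μ) = (1/μ) ∫₀^μ g(s) ds` (with `C(g)(0) := g(0)`). -/
def cesaro (g : ℝ → ℝ) (μ : ℝ) : ℝ :=
  if μ = 0 then g 0 else (∫ s in (0:ℝ)..μ, g s) / μ

/-- `M_k(g)(λ) = (1/k(λ)) ∫₀^λ g(s) k'(s) ds` (with `M_k(g)(0) := g(0)`). -/
def MkFun (k g : ℝ → ℝ) (l : ℝ) : ℝ :=
  if l = 0 then g 0 else (∫ s in (0:ℝ)..l, g s * deriv k s) / k l

/-- The Connes-Dixmier functional `τ_{γ,k}(x) = γ(M_k(φ(x)))`; the function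
`M_k(φ(x))`, bounded and continuous on `(0,∞)`, is fed to `γ` as `t ↦ M_k(φ(x))(max t 1)`. -/
def tauCD (γ : SCbStar) (ψ k x : ℝ → ℝ) : ℝ :=
  γ.toFun fun t => MkFun k (phiW ψ x) (max t 1)

/-- A set `Λ` of Banach limits has the Cesàro limit property if for each
`g ∈ C_b([0,∞))` both `liminf C(g)` and `limsup C(g)` are attained as values `L(g)`, `L ∈ Λ`. -/
def CesaroLimitProp (Λ : Set BanachLimitR) : Prop :=
  ∀ g : ℝ → ℝ, IsCb g →
    (∃ L ∈ Λ, L.toFun g = liminf (cesaro g) atTop) ∧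
    (∃ L ∈ Λ, L.toFun g = limsup (cesaro g) atTop)

/-- Dilation invariance of an element of `SC_b^*([0,∞))`. -/
def DilationInvariant (ω : SCbStar) : Prop :=
  ∀ g : ℝ → ℝ, IsCb g → ∀ a : ℝ, 0 < a → ω.toFun (fun t => g (a * t)) = ω.toFun g

open Topology

/-! To the right of `t` the numerator `∫₀^{κ s} x*` of `φ_κ(x)(s)` only grows, so `φ_κ(x)` lies
above `s ↦ (∫₀^{κ t} x*) / ψ(κ s)`, which agrees with it at `t`. Comparing right derivatives gives
`(φ_κ(x))'(t) ≥ -φ_κ(x)(t) · (ψ∘κ)'(t)/(ψ∘κ)(t)`, and dominated growth together with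
`0 ≤ φ_κ(x)(t) ≤ ‖x‖_{M(ψ)}` bounds the right-hand side below by `-C‖x‖_{M(ψ)}/t`. -/

theorem HasDerivAt.le_of_eq_of_eventuallyLE_nhdsGT {f g : ℝ → ℝ} {f' g' t : ℝ}
    (hg : HasDerivAt g g' t) (hf : HasDerivAt f f' t) (heq : g t = f t)
    (hle : g ≤ᶠ[𝓝[>] t] f) : g' ≤ f' := by
  refine le_of_tendsto_of_tendsto (hasDerivAt_iff_tendsto_slope_left_right.mp hg).2
    (hasDerivAt_iff_tendsto_slope_left_right.mp hf).2 ?_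
  filter_upwards [hle, self_mem_nhdsWithin] with s hs hts
  rw [slope_def_field, slope_def_field, heq]
  gcongr
  exact sub_nonneg.mpr (le_of_lt hts)

lemma OmegaInf.pos {ψ : ℝ → ℝ} (hψ : OmegaInf ψ) {a : ℝ} (ha : 0 < a) : 0 < ψ a := by
  obtain ⟨hconc, hnn, -, htop⟩ := hψ
  by_contra! hψa
  obtain ⟨b, hb, hab⟩ := ((htop.eventually_gt_atTop 0).and (eventually_gt_atTop a)).exists
  have hba : ψ b ≤ ψ a := hconc.right_le_of_le_left self_mem_Ici (ha.trans hab).le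
    (by rw [openSegment_eq_Ioo (ha.trans hab)]; exact ⟨ha, hab⟩) (hψa.trans (hnn 0 self_mem_Ici))
  linarith

lemma MemK.pos {κ : ℝ → ℝ} (hκ : MemK κ) {t : ℝ} (ht : 0 < t) : 0 < κ t :=
  hκ.2.1 ▸ hκ.1 self_mem_Ici ht.le ht

lemma decRearr_nonneg (x : ℝ → ℝ) (s : ℝ) : 0 ≤ decRearr x s :=
  Real.sInf_nonneg fun _ hy => hy.1

lemma phiW_nonneg {ψ : ℝ → ℝ} (hψ : OmegaInf ψ) (x : ℝ → ℝ) {t : ℝ} (ht : 0 ≤ t) :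
    0 ≤ phiW ψ x t :=
  div_nonneg (intervalIntegral.integral_nonneg ht fun s _ => decRearr_nonneg x s) (hψ.2.1 t ht)

lemma phiW_le_MNorm {ψ x : ℝ → ℝ} (hx : MemM ψ x) {t : ℝ} (ht : 0 < t) :
    phiW ψ x t ≤ MNorm ψ x := by
  obtain ⟨-, M, hM⟩ := hx
  have hbdd : BddAbove (range fun u => ⨆ _ : u > (0:ℝ), phiW ψ x u) := by
    refine ⟨max M 0, forall_mem_range.mpr fun u => ?_⟩
    by_cases hu : u > 0
    · rw [ciSup_pos hu]; exact le_max_of_le_left (hM u hu)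
    · rw [ciSup_neg hu, Real.sSup_empty]; exact le_max_right _ _
  have h := le_ciSup hbdd t
  rwa [ciSup_pos ht] at h

/-- If `x*` is not integrable up to any `κ s`, `s > t`, the integrals there are junk `0`;
continuity then forces `φ_κ(x)(t) = 0`, so the bound still holds. -/
lemma eventually_integral_div_le_phiW_comp {ψ κ x : ℝ → ℝ} (hψ : OmegaInf ψ) (hκ : MemK κ)
    {t : ℝ} (ht : 0 < t) (hcont : ContinuousAt (fun u => phiW ψ x (κ u)) t) :
    ∀ᶠ s in 𝓝[>] t, (∫ u in (0:ℝ)..κ t, decRearr x u) / ψ (κ s) ≤ phiW ψ x (κ s) := by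
  have hκmono : MonotoneOn κ (Ici 0) := hκ.1.monotoneOn
  by_cases hint : ∃ s₀ > t, IntervalIntegrable (decRearr x) volume 0 (κ s₀)
  · obtain ⟨s₀, hts₀, hs₀⟩ := hint
    filter_upwards [Ioo_mem_nhdsGT hts₀] with s ⟨hts, hss₀⟩
    have hκts : κ t ≤ κ s := hκmono ht.le (ht.trans hts).le hts.le
    have hκss₀ : κ s ≤ κ s₀ := hκmono (ht.trans hts).le (ht.trans hts₀).le hss₀.le
    have hs : IntervalIntegrable (decRearr x) volume 0 (κ s) :=
      hs₀.mono_set (uIcc_subset_uIcc_left (by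
        rw [uIcc_of_le (hκ.pos (ht.trans hts₀)).le]
        exact ⟨(hκ.pos (ht.trans hts)).le, hκss₀⟩))
    refine div_le_div_of_nonneg_right ?_ (hψ.2.1 _ (hκ.pos (ht.trans hts)).le)
    exact intervalIntegral.integral_mono_interval le_rfl (hκ.pos ht).le hκts
      (Eventually.of_forall fun u => decRearr_nonneg x u) hs
  · push Not at hint
    have hright : ∀ s > t, phiW ψ x (κ s) = 0 := fun s hs => by
      rw [phiW, intervalIntegral.integral_undef (hint s hs), zero_div]
    have hzero : phiW ψ x (κ t) = 0 :=
      tendsto_nhds_unique (hcont.tendsto.mono_left nhdsWithin_le_nhds)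
        (tendsto_const_nhds.congr'
          (eventually_nhdsWithin_of_forall (s := Ioi t) fun s hs => (hright s hs).symm))
    have hnum : ∫ u in (0:ℝ)..κ t, decRearr x u = 0 := by
      simpa [phiW, (hψ.pos (hκ.pos ht)).ne'] using hzero
    filter_upwards [self_mem_nhdsWithin] with s hs
    rw [hnum, zero_div, hright s hs]

/-- if `κ` has dominated growth with respect to `ψ` with constant
`C`, then `t·(φ_κ(x))'(t) ≥ −C‖x‖_{M(ψ)}` at every point of differentiability. -/
theorem deriv_phiKappa_lower_bound (ψ κ x : ℝ → ℝ) (hψ : OmegaInf ψ) (hκ : MemK κ)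
    (C : ℝ) (hC : 0 < C)
    (hdiff : ∀ t > (0:ℝ), DifferentiableAt ℝ (fun u => ψ (κ u)) t)
    (hdom : ∀ t > (0:ℝ), deriv (fun u => ψ (κ u)) t / ψ (κ t) < C / t)
    (hx : MemMplus ψ x) (t : ℝ) (ht : 0 < t)
    (hd : DifferentiableAt ℝ (fun u => phiW ψ x (κ u)) t) :
    -(C * MNorm ψ x) ≤ t * deriv (fun u => phiW ψ x (κ u)) t := by
  set P : ℝ → ℝ := fun u => ψ (κ u)
  set r := deriv P t / P t
  have hPt : 0 < P t := hψ.pos (hκ.pos ht)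
  have hφ₀ : 0 ≤ phiW ψ x (κ t) := phiW_nonneg hψ x (hκ.pos ht).le
  have hφN : phiW ψ x (κ t) ≤ MNorm ψ x := phiW_le_MNorm hx.1 (hκ.pos ht)
  have htr : t * r < C := by
    have := hdom t ht
    rwa [lt_div_iff₀ ht, mul_comm] at this
  have hlower : -(phiW ψ x (κ t) * r) ≤ deriv (fun u => phiW ψ x (κ u)) t := by
    refine HasDerivAt.le_of_eq_of_eventuallyLE_nhdsGT ?_ hd.hasDerivAt (by simp [phiW])
      (eventually_integral_div_le_phiW_comp hψ hκ ht hd.continuousAt)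
    refine ((hasDerivAt_const t _).div (hdiff t ht).hasDerivAt hPt.ne').congr_deriv ?_
    simp only [phiW, r, P]
    field_simp
    ring
  -- `C‖x‖ - φ_κ(x)(t) · t r = (‖x‖ - φ_κ(x)(t)) C + φ_κ(x)(t) (C - t r)`
  nlinarith [mul_nonneg (sub_nonneg.mpr hφN) hC.le, mul_nonneg hφ₀ (sub_nonneg.mpr htr.le)]
end
end

section
/- Let D(ℝ₊) denote the set of dilation-invariant elements of SC_b*([0,∞)). Then: (a) for every ω ∈ D(ℝ₊) there exists a Banach limit L ∈ BL(ℝ₊) such that L(t ↦ g(e^t)) = ω(g) for all g ∈ C_b([0,∞)); and (b) for every Banach limit L ∈ BL(ℝ₊), the formula ω(g) := L(t ↦ g(e^t)) defines an element of D(ℝ₊), i.e. a positive linear functional on C_b([0,∞)) with ω(1) = 1, vanishing on C₀([0,∞)), and satisfying ω(D_a g) = ω(g) for all a > 0. -/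
open MeasureTheory Filter Set

noncomputable section

/-!
Conjugation by `exp` turns dilations `u ↦ a u` into translations `t ↦ t + log a`. So a
Banach limit `L` gives the dilation-invariant state `g ↦ L(g ∘ exp)`, which kills `C₀`
because `L` only sees the behaviour at infinity. Conversely a dilation-invariant state `ω`
gives the Banach limit `f ↦ ω(f ∘ log)`; here `log` is replaced by the continuous
`u ↦ log (max u 1)`, which changes the argument of `ω` only on `[0, 1]`, invisible to `ω`.
-/

open Topology

lemma isCb_const (c : ℝ) : IsCb fun _ => c :=
  ⟨continuousOn_const, |c|, fun _ _ => le_rfl⟩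

lemma continuous_log_max_one : Continuous fun u : ℝ => Real.log (max u 1) :=
  (continuous_id.max continuous_const).log fun u => (one_pos.trans_le (le_max_right u 1)).ne'

namespace IsCb

variable {f g : ℝ → ℝ}

lemma add (hf : IsCb f) (hg : IsCb g) : IsCb fun t => f t + g t := by
  obtain ⟨Mf, hMf⟩ := hf.2
  obtain ⟨Mg, hMg⟩ := hg.2
  exact ⟨hf.1.add hg.1, Mf + Mg, fun t ht =>
    (abs_add_le _ _).trans (add_le_add (hMf t ht) (hMg t ht))⟩

lemma const_mul (c : ℝ) (hf : IsCb f) : IsCb fun t => c * f t := by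
  obtain ⟨M, hM⟩ := hf.2
  exact ⟨continuousOn_const.mul hf.1, |c| * M, fun t ht => by
    rw [abs_mul]
    exact mul_le_mul_of_nonneg_left (hM t ht) (abs_nonneg c)⟩

lemma sub (hf : IsCb f) (hg : IsCb g) : IsCb fun t => f t - g t := by
  simpa only [neg_one_mul, ← sub_eq_add_neg] using hf.add (hg.const_mul (-1))

lemma comp (hf : IsCb f) {φ : ℝ → ℝ} (hφ : ContinuousOn φ (Ici 0))
    (hmaps : MapsTo φ (Ici 0) (Ici 0)) : IsCb fun t => f (φ t) := by
  obtain ⟨M, hM⟩ := hf.2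
  exact ⟨hf.1.comp hφ hmaps, M, fun t ht => hM _ (hmaps ht)⟩

lemma comp_exp (hf : IsCb f) : IsCb fun t => f (Real.exp t) :=
  hf.comp Real.continuous_exp.continuousOn fun t _ => (Real.exp_pos t).le

lemma comp_log_max_one (hf : IsCb f) : IsCb fun u => f (Real.log (max u 1)) :=
  hf.comp continuous_log_max_one.continuousOn
    fun u _ => Real.log_nonneg (le_max_right u 1)

end IsCb

namespace PosLinFunc

variable (φ : PosLinFunc) {f g : ℝ → ℝ}

lemma map_sub (hf : IsCb f) (hg : IsCb g) :
    φ.toFun (fun t => f t - g t) = φ.toFun f - φ.toFun g := by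
  have h := φ.map_add f _ hf (hg.const_mul (-1))
  rw [φ.map_smul (-1) g hg] at h
  simpa only [neg_one_mul, ← sub_eq_add_neg] using h

lemma mono (hf : IsCb f) (hg : IsCb g) (hle : ∀ t ∈ Ici (0 : ℝ), f t ≤ g t) :
    φ.toFun f ≤ φ.toFun g := by
  have h := φ.pos _ (hg.sub hf) fun t ht => sub_nonneg.mpr (hle t ht)
  rwa [φ.map_sub hg hf, sub_nonneg] at h

end PosLinFunc

def BanachLimitR.toPosLinFunc (L : BanachLimitR) : PosLinFunc :=
  ⟨L.toFun, L.map_add, L.map_smul, L.pos⟩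

def SCbStar.toPosLinFunc (ω : SCbStar) : PosLinFunc :=
  ⟨ω.toFun, ω.map_add, ω.map_smul, ω.pos⟩

lemma SCbStar.toFun_congr (ω : SCbStar) {f g : ℝ → ℝ} (hf : IsCb f) (hg : IsCb g)
    (hfg : f =ᶠ[atTop] g) : ω.toFun f = ω.toFun g := by
  have hlim : Tendsto (fun t => f t - g t) atTop (𝓝 0) :=
    tendsto_const_nhds.congr' (hfg.mono fun t ht => by simp [ht])
  exact sub_eq_zero.mp ((ω.toPosLinFunc.map_sub hf hg).symm.trans (ω.vanish _ (hf.sub hg) hlim))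

namespace BanachLimitR

variable (L : BanachLimitR) {f : ℝ → ℝ}

lemma toFun_const (c : ℝ) : L.toFun (fun _ => c) = c := by
  simpa [L.map_one] using L.map_smul c (fun _ => 1) (isCb_const 1)

lemma abs_toFun_le (hf : IsCb f) {ε : ℝ} (hε : ∀ t ∈ Ici (0 : ℝ), |f t| ≤ ε) :
    |L.toFun f| ≤ ε := by
  have hlo := L.toPosLinFunc.mono (isCb_const (-ε)) hf fun t ht => (abs_le.mp (hε t ht)).1
  have hhi := L.toPosLinFunc.mono hf (isCb_const ε) fun t ht => (abs_le.mp (hε t ht)).2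
  exact abs_le.mpr ⟨(L.toFun_const (-ε)).symm.trans_le hlo, hhi.trans_eq (L.toFun_const ε)⟩

lemma toFun_eq_zero_of_tendsto (hf : IsCb f) (h0 : Tendsto f atTop (𝓝 0)) :
    L.toFun f = 0 := by
  refine abs_nonpos_iff.mp (le_of_forall_pos_le_add fun ε hε => ?_)
  obtain ⟨N, hN⟩ := eventually_atTop.mp (h0.eventually (Metric.closedBall_mem_nhds 0 hε))
  set s := max N 0
  have hshift : IsCb fun t => f (t + s) :=
    hf.comp (continuous_add_const s).continuousOn fun t ht =>
      add_nonneg (mem_Ici.mp ht) (le_max_right N 0)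
  rw [zero_add, ← L.shift_inv f hf s (le_max_right N 0)]
  refine L.abs_toFun_le hshift fun t ht => ?_
  have hts := hN (t + s) (by linarith [mem_Ici.mp ht, le_max_left N 0])
  simpa [Real.dist_eq] using hts

lemma toFun_comp_add (hf : ∀ s, IsCb fun t => f (t + s)) (s : ℝ) :
    L.toFun (fun t => f (t + s)) = L.toFun f := by
  have hf₀ : IsCb f := by simpa using hf 0
  rcases le_total 0 s with hs | hs
  · exact L.shift_inv f hf₀ s hs
  · have h := L.shift_inv _ (hf s) (-s) (neg_nonneg.mpr hs)
    simp only [neg_add_cancel_right] at h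
    exact h.symm

def toSCbStar : SCbStar where
  toFun g := L.toFun fun t => g (Real.exp t)
  map_add _ _ hf hg := L.map_add _ _ hf.comp_exp hg.comp_exp
  map_smul c _ hf := L.map_smul c _ hf.comp_exp
  pos _ hf hpos := L.pos _ hf.comp_exp fun t _ => hpos _ (Real.exp_pos t).le
  map_one := L.map_one
  vanish _ hf h0 := L.toFun_eq_zero_of_tendsto hf.comp_exp (h0.comp Real.tendsto_exp_atTop)

lemma dilationInvariant_toSCbStar : DilationInvariant L.toSCbStar := by
  intro g hg a ha
  have hshift : ∀ s, IsCb fun t => g (Real.exp (t + s)) := fun s =>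
    hg.comp (Real.continuous_exp.comp (continuous_add_const s)).continuousOn
      fun t _ => (Real.exp_pos _).le
  have hdil : (fun t => g (a * Real.exp t)) = fun t => g (Real.exp (t + Real.log a)) := by
    funext t
    rw [Real.exp_add, Real.exp_log ha, mul_comm]
  change L.toFun (fun t => g (a * Real.exp t)) = L.toFun fun t => g (Real.exp t)
  rw [hdil]
  exact L.toFun_comp_add (f := fun t => g (Real.exp t)) hshift (Real.log a)

end BanachLimitR

namespace SCbStar

variable {ω : SCbStar}

lemma toFun_comp_log_max_one_add (hω : DilationInvariant ω) {f : ℝ → ℝ} (hf : IsCb f)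
    {s : ℝ} (hs : 0 ≤ s) :
    ω.toFun (fun u => f (Real.log (max u 1) + s)) = ω.toFun fun u => f (Real.log (max u 1)) := by
  have hf' := hf.comp_log_max_one
  have hfs : IsCb fun u => f (Real.log (max u 1) + s) :=
    hf.comp (continuous_log_max_one.add continuous_const).continuousOn
      fun u _ => add_nonneg (Real.log_nonneg (le_max_right u 1)) hs
  have hdil : (fun u => f (Real.log (max u 1) + s)) =ᶠ[atTop]
      fun u => f (Real.log (max (Real.exp s * u) 1)) := by
    filter_upwards [eventually_ge_atTop 1] with u hu
    have hsu : 1 ≤ Real.exp s * u := one_le_mul_of_one_le_of_one_le (Real.one_le_exp hs) hu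
    rw [max_eq_left hu, max_eq_left hsu, Real.log_mul (Real.exp_ne_zero s) (by positivity),
      Real.log_exp, add_comm]
  rw [ω.toFun_congr hfs (hf'.comp (continuous_const.mul continuous_id).continuousOn
    fun u hu => mul_nonneg (Real.exp_pos s).le hu) hdil]
  exact hω _ hf' _ (Real.exp_pos s)

def toBanachLimitR (ω : SCbStar) (hω : DilationInvariant ω) : BanachLimitR where
  toFun f := ω.toFun fun u => f (Real.log (max u 1))
  map_add _ _ hf hg := ω.map_add _ _ hf.comp_log_max_one hg.comp_log_max_one
  map_smul c _ hf := ω.map_smul c _ hf.comp_log_max_one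
  pos _ hf hpos := ω.pos _ hf.comp_log_max_one fun u _ =>
    hpos _ (Real.log_nonneg (le_max_right u 1))
  map_one := ω.map_one
  shift_inv _ hf _ hs := toFun_comp_log_max_one_add hω hf hs

lemma toBanachLimitR_toFun_comp_exp (hω : DilationInvariant ω) {g : ℝ → ℝ} (hg : IsCb g) :
    (ω.toBanachLimitR hω).toFun (fun t => g (Real.exp t)) = ω.toFun g := by
  refine ω.toFun_congr hg.comp_exp.comp_log_max_one hg ?_
  filter_upwards [eventually_ge_atTop 1] with u hu
  rw [max_eq_left hu, Real.exp_log (by positivity)]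

end SCbStar

/-- dilation-invariant states on `C_b([0,∞))` (vanishing on
`C₀`) correspond to Banach limits via composition with `exp`. -/
theorem dilation_invariant_iff_banachLimit_exp :
    (∀ ω : SCbStar, DilationInvariant ω →
      ∃ L : BanachLimitR, ∀ g : ℝ → ℝ, IsCb g →
        L.toFun (fun t => g (Real.exp t)) = ω.toFun g) ∧
    (∀ L : BanachLimitR, ∃ ω : SCbStar,
      DilationInvariant ω ∧ ∀ g : ℝ → ℝ, ω.toFun g = L.toFun (fun t => g (Real.exp t))) :=
  ⟨fun ω hω =>
    ⟨ω.toBanachLimitR hω, fun _ hg => SCbStar.toBanachLimitR_toFun_comp_exp hω hg⟩,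
  fun L => ⟨L.toSCbStar, L.dilationInvariant_toSCbStar, fun _ => rfl⟩⟩
end
end
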